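/- arXiv:1503.02553 — 7 statements merged into one kernel-verified Lean document; each statement's English description precedes it below -/
import Mathlib

section
/- For every ρ with 0 ≤ ρ < 0.289, the real symmetric 5×5 matrix with rows [1, -(1+ρ)/2, 0, -(1+ρ)/(2√2), 0], [-(1+ρ)/2, 1, 0, 0, 0], [0, 0, 1, 0, -1/2], [-(1+ρ)/(2√2), 0, 0, (1-ρ)/2, 0], [0, 0, -1/2, 0, 1] is positive definite. -/
/-!
Up to permuting coordinates the matrix is the direct sum of the block `[[1, -t, -u], [-t, 1, 0],
[-u, 0, d]]` on coordinates `0, 1, 3` and of `[[1, -1/2], [-1/2, 1]]` on coordinates `2, 4`.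
Completing the square in `x₀` reduces the first block to a binary form in `x₁, x₃` whose
discriminant condition is the positivity of the determinant `(1 - t²) d - u²`. For
`t = (1+ρ)/2`, `u = (1+ρ)/(2√2)`, `d = (1-ρ)/2` this determinant is `(2 - 7ρ + ρ³)/8`, positive
for `0 ≤ ρ < 0.289` since the cubic decreases on `[0, 1]` and is still positive at `0.289`.
-/

open Matrix

lemma binary_form_pos {p q r x y : ℝ} (hp : 0 < p) (hdisc : q ^ 2 < p * r)
    (hxy : x ≠ 0 ∨ y ≠ 0) : 0 < p * x ^ 2 + 2 * q * x * y + r * y ^ 2 := by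
  have hsq : p * (p * x ^ 2 + 2 * q * x * y + r * y ^ 2) =
      (p * x + q * y) ^ 2 + (p * r - q ^ 2) * y ^ 2 := by ring
  refine pos_of_mul_pos_right (hsq ▸ ?_) hp.le
  have hdisc' : 0 < p * r - q ^ 2 := by linarith
  rcases eq_or_ne y 0 with rfl | hy
  · have hx : x ≠ 0 := by simpa using hxy
    simp only [mul_zero, add_zero, ne_eq, OfNat.ofNat_ne_zero, not_false_eq_true, zero_pow]
    positivity
  · positivity

lemma binary_form_nonneg {p q r : ℝ} (hp : 0 < p) (hdisc : q ^ 2 < p * r) (x y : ℝ) :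
    0 ≤ p * x ^ 2 + 2 * q * x * y + r * y ^ 2 := by
  by_cases hxy : x ≠ 0 ∨ y ≠ 0
  · exact (binary_form_pos hp hdisc hxy).le
  · obtain ⟨rfl, rfl⟩ : x = 0 ∧ y = 0 := by simpa [not_or] using hxy
    simp

noncomputable def arrowBlockMatrix (t u d : ℝ) : Matrix (Fin 5) (Fin 5) ℝ :=
  !![1, -t, 0, -u, 0;
     -t, 1, 0, 0, 0;
     0, 0, 1, 0, -(1/2);
     -u, 0, 0, d, 0;
     0, 0, -(1/2), 0, 1]

lemma arrowBlockMatrix_quadForm (t u d : ℝ) (x : Fin 5 → ℝ) :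
    star x ⬝ᵥ (arrowBlockMatrix t u d *ᵥ x) =
      (x 0 - t * x 1 - u * x 3) ^ 2
        + ((1 - t ^ 2) * x 1 ^ 2 + 2 * (-(t * u)) * x 1 * x 3 + (d - u ^ 2) * x 3 ^ 2)
        + (1 * x 2 ^ 2 + 2 * (-(1/2)) * x 2 * x 4 + 1 * x 4 ^ 2) := by
  simp only [arrowBlockMatrix, dotProduct, Fin.sum_univ_five, cons_mulVec, empty_mulVec, cons_val,
    Pi.star_apply, star_trivial]
  ring

theorem arrowBlockMatrix_posDef {t u d : ℝ} (ht : t ^ 2 < 1) (hdet : u ^ 2 < (1 - t ^ 2) * d) :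
    (arrowBlockMatrix t u d).PosDef := by
  have hp : 0 < 1 - t ^ 2 := by linarith
  have hdisc : (-(t * u)) ^ 2 < (1 - t ^ 2) * (d - u ^ 2) := by linarith
  have hdisc₂ : (-(1/2 : ℝ)) ^ 2 < 1 * 1 := by norm_num
  refine PosDef.of_dotProduct_mulVec_pos ?_ fun x hx => ?_
  · ext i j
    fin_cases i <;> fin_cases j <;> simp [arrowBlockMatrix]
  rw [arrowBlockMatrix_quadForm]
  have hF := binary_form_nonneg hp hdisc (x 1) (x 3)
  have hG := binary_form_nonneg one_pos hdisc₂ (x 2) (x 4)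
  have hS := sq_nonneg (x 0 - t * x 1 - u * x 3)
  by_cases h13 : x 1 ≠ 0 ∨ x 3 ≠ 0
  · linarith [binary_form_pos hp hdisc h13]
  by_cases h24 : x 2 ≠ 0 ∨ x 4 ≠ 0
  · linarith [binary_form_pos one_pos hdisc₂ h24]
  simp only [ne_eq, not_or, not_not] at h13 h24
  obtain ⟨h1, h3⟩ := h13
  obtain ⟨h2, h4⟩ := h24
  have h0 : x 0 ≠ 0 := fun h0 => hx (by ext i; fin_cases i <;> assumption)
  simp only [h1, h2, h3, h4, mul_zero, sub_zero, ne_eq, OfNat.ofNat_ne_zero, not_false_eq_true,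
    zero_pow, add_zero]
  positivity

lemma two_sub_seven_mul_add_pow_three_pos {ρ : ℝ} (hρ0 : 0 ≤ ρ) (hρ1 : ρ < 0.289) :
    0 < 2 - 7 * ρ + ρ ^ 3 := by
  have hgap : 0 < (0.289 - ρ) * (7 - (ρ ^ 2 + 0.289 * ρ + 0.289 ^ 2)) :=
    mul_pos (by linarith) (by nlinarith)
  nlinarith

theorem stmt3 (ρ : ℝ) (hρ0 : 0 ≤ ρ) (hρ1 : ρ < 0.289) :
    Matrix.PosDef (!![(1 : ℝ), -((1+ρ)/2), 0, -((1+ρ)/(2*Real.sqrt 2)), 0;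
                      -((1+ρ)/2), 1, 0, 0, 0;
                      0, 0, 1, 0, -(1/2);
                      -((1+ρ)/(2*Real.sqrt 2)), 0, 0, (1-ρ)/2, 0;
                      0, 0, -(1/2), 0, 1]) := by
  have hu : ((1 + ρ) / (2 * Real.sqrt 2)) ^ 2 = (1 + ρ) ^ 2 / 8 := by
    rw [div_pow, mul_pow, Real.sq_sqrt zero_le_two]
    norm_num
  have hdet : ((1 + ρ) / (2 * Real.sqrt 2)) ^ 2 < (1 - ((1 + ρ) / 2) ^ 2) * ((1 - ρ) / 2) := by
    rw [hu]
    nlinarith [two_sub_seven_mul_add_pow_three_pos hρ0 hρ1]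
  exact arrowBlockMatrix_posDef (by nlinarith) hdet
end

section
/- Let H be a real inner product space, let A : H → H be a symmetric positive definite bounded linear operator with associated inner product (x,y)_A = ⟨Ax, y⟩, and let Q : H → H be symmetric positive definite. If ‖I - QA‖_A ≤ ρ for some 0 ≤ ρ < 1 (operator norm induced by the A-norm), then (1-ρ)⟨A⁻¹v, v⟩ ≤ ⟨Qv, v⟩ ≤ (1+ρ)⟨A⁻¹v, v⟩ for all v ∈ H. -/
/-!
Put `x = A⁻¹ v` and `e = x - Q A x`, so that `⟪Q v, v⟫ = ⟪A x, x⟫ - ⟪A x, e⟫` and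
`⟪A⁻¹ v, v⟫ = ⟪A x, x⟫`. By Cauchy–Schwarz for the semi-inner product `⟪A ·, ·⟫` and the
hypothesis `‖e‖_A ≤ ρ ‖x‖_A`, the correction term satisfies `|⟪A x, e⟫| ≤ ρ ⟪A x, x⟫`.
-/

open scoped RealInnerProductSpace

namespace LinearMap.IsPositive

variable {E : Type*} [NormedAddCommGroup E] [InnerProductSpace ℝ E] {A : E →ₗ[ℝ] E}

theorem inner_apply_sq_le (hA : A.IsPositive) (x y : E) :
    ⟪A x, y⟫ ^ 2 ≤ ⟪A x, x⟫ * ⟪A y, y⟫ :=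
  BilinForm.apply_sq_le_of_symm (innerₗ E ∘ₗ A) hA.inner_nonneg_left
    ⟨fun x y => by simp [hA.isSymmetric x y, real_inner_comm]⟩ x y

theorem abs_inner_apply_le (hA : A.IsPositive) {x y : E} {ρ : ℝ} (hρ : 0 ≤ ρ)
    (hy : ⟪A y, y⟫ ≤ ρ ^ 2 * ⟪A x, x⟫) :
    |⟪A x, y⟫| ≤ ρ * ⟪A x, x⟫ := by
  have hx := hA.inner_nonneg_left x
  refine abs_le_of_sq_le_sq ?_ (mul_nonneg hρ hx)
  calc ⟪A x, y⟫ ^ 2 ≤ ⟪A x, x⟫ * ⟪A y, y⟫ := hA.inner_apply_sq_le x y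
    _ ≤ ⟪A x, x⟫ * (ρ ^ 2 * ⟪A x, x⟫) := mul_le_mul_of_nonneg_left hy hx
    _ = (ρ * ⟪A x, x⟫) ^ 2 := by ring

end LinearMap.IsPositive

theorem stmt4_general {H : Type*} [NormedAddCommGroup H] [InnerProductSpace ℝ H]
    (A Q Ainv : H →ₗ[ℝ] H) (ρ : ℝ)
    (hAsymm : ∀ x y : H, ⟪A x, y⟫ = ⟪x, A y⟫)
    (hApos : ∀ x : H, x ≠ 0 → 0 < ⟪A x, x⟫)
    (hInv1 : A ∘ₗ Ainv = LinearMap.id)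
    (hρ0 : 0 ≤ ρ)
    (hbound : ∀ x : H, ⟪A (x - Q (A x)), x - Q (A x)⟫ ≤ ρ^2 * ⟪A x, x⟫) :
    ∀ v : H, (1 - ρ) * ⟪Ainv v, v⟫ ≤ ⟪Q v, v⟫ ∧ ⟪Q v, v⟫ ≤ (1 + ρ) * ⟪Ainv v, v⟫ := by
  intro v
  have hA : A.IsPositive := A.isPositive_iff.2 ⟨hAsymm, fun x => by
    rcases eq_or_ne x 0 with rfl | hx
    · simp
    · exact (hApos x hx).le⟩
  set x := Ainv v
  have hAx : A x = v := LinearMap.congr_fun hInv1 v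
  have hAinv : ⟪x, v⟫ = ⟪A x, x⟫ := by rw [hAx, real_inner_comm]
  have hQ : ⟪Q v, v⟫ = ⟪A x, x⟫ - ⟪A x, x - Q (A x)⟫ := by
    rw [inner_sub_right, hAx, real_inner_comm v]
    ring
  obtain ⟨hlower, hupper⟩ := abs_le.1 (hA.abs_inner_apply_le hρ0 (hbound x))
  rw [hAinv, hQ]
  exact ⟨by linarith, by linarith⟩

/-- If `A` and `Q` are symmetric positive definite operators on a finite-dimensional
real inner product space, `Ainv` is the inverse of `A`, and `‖I - QA‖_A ≤ ρ` with
`0 ≤ ρ < 1`, then `(1-ρ)⟨A⁻¹v, v⟩ ≤ ⟨Qv, v⟩ ≤ (1+ρ)⟨A⁻¹v, v⟩` for all `v`. -/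
theorem stmt4 {H : Type*} [NormedAddCommGroup H] [InnerProductSpace ℝ H]
    [FiniteDimensional ℝ H]
    (A Q Ainv : H →ₗ[ℝ] H) (ρ : ℝ)
    (hAsymm : ∀ x y : H, ⟪A x, y⟫ = ⟪x, A y⟫)
    (hApos : ∀ x : H, x ≠ 0 → 0 < ⟪A x, x⟫)
    (hQsymm : ∀ x y : H, ⟪Q x, y⟫ = ⟪x, Q y⟫)
    (hQpos : ∀ x : H, x ≠ 0 → 0 < ⟪Q x, x⟫)
    (hInv1 : A ∘ₗ Ainv = LinearMap.id) (hInv2 : Ainv ∘ₗ A = LinearMap.id)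
    (hρ0 : 0 ≤ ρ) (hρ1 : ρ < 1)
    (hbound : ∀ x : H, ⟪A (x - Q (A x)), x - Q (A x)⟫ ≤ ρ^2 * ⟪A x, x⟫) :
    ∀ v : H, (1 - ρ) * ⟪Ainv v, v⟫ ≤ ⟪Q v, v⟫ ∧ ⟪Q v, v⟫ ≤ (1 + ρ) * ⟪Ainv v, v⟫ :=
  stmt4_general A Q Ainv ρ hAsymm hApos hInv1 hρ0 hbound
end

section
/- Let H be a real inner product space and A, Q : H → H SPD operators with ‖I - QA‖_A ≤ ρ, 0 ≤ ρ < 1. Then (1+ρ)^{-1}⟨Av, v⟩ ≤ ⟨Q⁻¹v, v⟩ ≤ (1-ρ)^{-1}⟨Av, v⟩ for all v ∈ H. -/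
/-!
Cauchy–Schwarz in the `A`-inner product turns `‖I - QA‖_A ≤ ρ` into the two-sided comparison
`(1 - ρ) ⟪A⁻¹ y, y⟫ ≤ ⟪Q y, y⟫ ≤ (1 + ρ) ⟪A⁻¹ y, y⟫`. Such comparisons between positive operators
are reversed by inversion (Cauchy–Schwarz once more), which gives the bounds for `Q⁻¹` against `A`.
-/

open scoped RealInnerProductSpace

section

variable {H : Type*} [NormedAddCommGroup H] [InnerProductSpace ℝ H]

namespace LinearMap

theorem isPositive_of_inner_pos {T : H →ₗ[ℝ] H} (hsymm : T.IsSymmetric)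
    (hpos : ∀ x : H, x ≠ 0 → 0 < ⟪T x, x⟫) : T.IsPositive := by
  refine (T.isPositive_iff).mpr ⟨hsymm, fun x => ?_⟩
  rcases eq_or_ne x 0 with rfl | hx
  · simp
  · exact (hpos x hx).le

theorem IsPositive.real_inner_sq_le {T : H →ₗ[ℝ] H} (hT : T.IsPositive) (x y : H) :
    ⟪T x, y⟫ ^ 2 ≤ ⟪T x, x⟫ * ⟪T y, y⟫ := by
  have hquad : ∀ t : ℝ, 0 ≤ ⟪T y, y⟫ * (t * t) + 2 * ⟪T x, y⟫ * t + ⟪T x, x⟫ := by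
    intro t
    have hsymm : ⟪T y, x⟫ = ⟪T x, y⟫ := by rw [hT.isSymmetric y x, real_inner_comm]
    have := hT.inner_nonneg_left (x + t • y)
    simp only [map_add, map_smul, inner_add_left, inner_add_right, real_inner_smul_left,
      real_inner_smul_right, hsymm] at this
    linarith
  have := discrim_le_zero hquad
  rw [discrim] at this
  linarith

theorem IsPositive.abs_real_inner_le_of_inner_le {T : H →ₗ[ℝ] H} (hT : T.IsPositive) {ρ : ℝ}
    (hρ : 0 ≤ ρ) {x y : H} (hy : ⟪T y, y⟫ ≤ ρ ^ 2 * ⟪T x, x⟫) :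
    |⟪T y, x⟫| ≤ ρ * ⟪T x, x⟫ := by
  refine abs_le_of_sq_le_sq ?_ (mul_nonneg hρ (hT.inner_nonneg_left x))
  calc ⟪T y, x⟫ ^ 2 ≤ ⟪T y, y⟫ * ⟪T x, x⟫ := hT.real_inner_sq_le y x
    _ ≤ ρ ^ 2 * ⟪T x, x⟫ * ⟪T x, x⟫ := by gcongr; exact hT.inner_nonneg_left x
    _ = (ρ * ⟪T x, x⟫) ^ 2 := by ring

end LinearMap

namespace LinearEquiv

theorem real_inner_symm_le_of_inner_le {S T : H ≃ₗ[ℝ] H} (hS : S.IsPositive) {c : ℝ}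
    (hc : 0 < c) (hST : ∀ x, ⟪S x, x⟫ ≤ c * ⟪T x, x⟫) (y : H) :
    ⟪T.symm y, y⟫ ≤ c * ⟪S.symm y, y⟫ := by
  set a := ⟪T.symm y, y⟫
  set b := ⟪S.symm y, y⟫
  have hSu : ⟪S (T.symm y), T.symm y⟫ ≤ c * a := by
    simpa [a, real_inner_comm] using hST (T.symm y)
  have hb : 0 ≤ b := by simpa using hS.toLinearMap_symm.inner_nonneg_left y
  have ha : 0 ≤ a := nonneg_of_mul_nonneg_right
    ((hS.inner_nonneg_left (T.symm y)).trans hSu) hc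
  -- `a = ⟪S u, w⟫` for `u = T⁻¹ y`, `w = S⁻¹ y`, so Cauchy–Schwarz for `S` bounds `a ^ 2`
  have hcs : a ^ 2 ≤ c * a * b := by
    have h := hS.real_inner_sq_le (T.symm y) (S.symm y)
    have e1 : ⟪(S : H →ₗ[ℝ] H) (T.symm y), S.symm y⟫ = a := by
      rw [hS.isSymmetric]; simp [a, real_inner_comm]
    have e2 : ⟪(S : H →ₗ[ℝ] H) (S.symm y), S.symm y⟫ = b := by simp [b, real_inner_comm]
    rw [e1, e2] at h
    exact h.trans (mul_le_mul_of_nonneg_right hSu hb)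
  rcases ha.eq_or_lt with ha0 | hapos
  · rw [← ha0]; positivity
  · nlinarith

end LinearEquiv

end

/-- If `A` and `Q` are SPD operators with `‖I - QA‖_A ≤ ρ`, `0 ≤ ρ < 1`, then
`(1+ρ)⁻¹⟨Av, v⟩ ≤ ⟨Q⁻¹v, v⟩ ≤ (1-ρ)⁻¹⟨Av, v⟩` for all `v`. -/
theorem stmt5 {H : Type*} [NormedAddCommGroup H] [InnerProductSpace ℝ H]
    [FiniteDimensional ℝ H]
    (A Q Qinv : H →ₗ[ℝ] H) (ρ : ℝ)
    (hAsymm : ∀ x y : H, ⟪A x, y⟫ = ⟪x, A y⟫)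
    (hApos : ∀ x : H, x ≠ 0 → 0 < ⟪A x, x⟫)
    (hQsymm : ∀ x y : H, ⟪Q x, y⟫ = ⟪x, Q y⟫)
    (hQpos : ∀ x : H, x ≠ 0 → 0 < ⟪Q x, x⟫)
    (hInv1 : Q ∘ₗ Qinv = LinearMap.id) (hInv2 : Qinv ∘ₗ Q = LinearMap.id)
    (hρ0 : 0 ≤ ρ) (hρ1 : ρ < 1)
    (hbound : ∀ x : H, ⟪A (x - Q (A x)), x - Q (A x)⟫ ≤ ρ^2 * ⟪A x, x⟫) :
    ∀ v : H, (1 + ρ)⁻¹ * ⟪A v, v⟫ ≤ ⟪Qinv v, v⟫ ∧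
      ⟪Qinv v, v⟫ ≤ (1 - ρ)⁻¹ * ⟪A v, v⟫ := by
  have hA : A.IsPositive := LinearMap.isPositive_of_inner_pos hAsymm hApos
  let Ae : H ≃ₗ[ℝ] H := .ofInjectiveEndo A fun x y hxy => by
    by_contra hne
    simpa [hxy] using hApos (x - y) (sub_ne_zero.mpr hne)
  let Qe : H ≃ₗ[ℝ] H := .ofLinearMap Q Qinv hInv1 hInv2
  have hQ : Qe.IsPositive := LinearMap.isPositive_of_inner_pos hQsymm hQpos
  -- `hbound` at `x = A⁻¹ y` compares the quadratic forms of `Q` and `A⁻¹`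
  have hcomp : ∀ y, |⟪Ae.symm y, y⟫ - ⟪Qe y, y⟫| ≤ ρ * ⟪Ae.symm y, y⟫ := by
    intro y
    have hy : A (Ae.symm y) = y := Ae.apply_symm_apply y
    have h := hA.abs_real_inner_le_of_inner_le hρ0 (hbound (Ae.symm y))
    rwa [hA.isSymmetric, hy, inner_sub_left, real_inner_comm (Ae.symm y) y] at h
  intro v
  constructor
  · rw [inv_mul_le_iff₀ (by linarith)]
    exact LinearEquiv.real_inner_symm_le_of_inner_le hQ (T := Ae.symm) (by linarith)
      (fun y => by linarith [abs_le.mp (hcomp y)]) v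
  · exact LinearEquiv.real_inner_symm_le_of_inner_le (hA.toLinearMap_symm (T := Ae)) (T := Qe)
      (inv_pos.mpr (by linarith)) (fun y => by
        rw [le_inv_mul_iff₀ (by linarith)]; linarith [abs_le.mp (hcomp y)]) v
end

section
/- Let H₁, H₂ be finite-dimensional real inner product spaces, A₁ : H₁ → H₁ SPD, B : H₁ → H₂ linear, and H₂-operator H₂op : H₂ → H₂ SPD. Suppose the inf-sup condition holds: for every x₂ ∈ H₂, sup over nonzero x₁ of ⟨Bx₁, x₂⟩ / ‖x₁‖_{A₁} ≥ ζ‖x₂‖_{H₂op} with ζ > 0. Then for the block operator 𝓐 = [[A₁, -B*],[B, 0]] on H₁ × H₂ and the block lower triangular preconditioner 𝓜_L = [[A₁, 0],[B, H₂op]]⁻¹, there exists γ > 0 depending only on ζ such that ⟨x, 𝓜_L 𝓐 x⟩_{𝓜⁻¹} ≥ γ ⟨x, x⟩_{𝓜⁻¹} for all x ∈ H₁ × H₂, where 𝓜⁻¹ = diag(A₁, H₂op). -/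
open scoped RealInnerProductSpace

/-!
Put `e = x₁ - y₁`. The first equation says `A₁ e = B* x₂`, so `e` is the `A₁`-Riesz representative
of `x ↦ ⟪B x, x₂⟫`; by Cauchy–Schwarz in the `A₁`-inner product the inf-sup quotient is at most
`‖e‖_{A₁}`, whence `ζ² ‖x₂‖²_{H₂op} ≤ ‖e‖²_{A₁}`. The second equation gives
`⟪H₂op x₂, y₂⟫ = ⟪B* x₂, e⟫ = ‖e‖²_{A₁}`, and polarization of `⟪A₁ x₁, x₁ - e⟫` yields
`2 (⟪A₁ x₁, y₁⟫ + ⟪H₂op x₂, y₂⟫) = ‖x₁‖²_{A₁} + ‖y₁‖²_{A₁} + ‖e‖²_{A₁}`,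
so `γ = min 1 ζ² / 2` works.
-/

namespace LinearMap

variable {E F : Type*} [NormedAddCommGroup E] [InnerProductSpace ℝ E]
  [NormedAddCommGroup F] [InnerProductSpace ℝ F] {A : E →ₗ[ℝ] E}

theorem isPositive_of_forall_inner_pos (hsymm : A.IsSymmetric)
    (hpos : ∀ x, x ≠ 0 → 0 < ⟪A x, x⟫) : A.IsPositive := by
  refine (isPositive_iff A).2 ⟨hsymm, fun x => ?_⟩
  rcases eq_or_ne x 0 with rfl | hx
  · simp
  · exact (hpos x hx).le

theorem IsSymmetric.inner_map_sub_self (hA : A.IsSymmetric) (x y : E) :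
    ⟪A (x - y), x - y⟫ = ⟪A x, x⟫ - 2 * ⟪A x, y⟫ + ⟪A y, y⟫ := by
  have hyx : ⟪A y, x⟫ = ⟪A x, y⟫ := by rw [hA y x, real_inner_comm]
  simp only [map_sub, inner_sub_left, inner_sub_right, hyx]
  ring

theorem IsPositive.inner_le_sqrt_mul_sqrt (hA : A.IsPositive) (u v : E) :
    ⟪A u, v⟫ ≤ √⟪A u, u⟫ * √⟪A v, v⟫ := by
  have hsq : ⟪A u, v⟫ ^ 2 ≤ ⟪A u, u⟫ * ⟪A v, v⟫ := by
    have := BilinForm.apply_mul_apply_le_of_forall_zero_le (innerₗ E ∘ₗ A)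
      hA.inner_nonneg_left u v
    simpa [sq, hA.isSymmetric v u, real_inner_comm] using this
  rw [← Real.sqrt_mul (hA.inner_nonneg_left u)]
  exact (le_abs_self _).trans (Real.abs_le_sqrt hsq)

theorem IsPositive.iSup_inner_div_sqrt_le (hA : A.IsPositive) (e : E) :
    ⨆ x : {x : E // x ≠ 0}, ⟪A e, (x : E)⟫ / √⟪A x, x⟫ ≤ √⟪A e, e⟫ := by
  refine Real.iSup_le (fun x => ?_) (Real.sqrt_nonneg _)
  rcases (hA.inner_nonneg_left x).eq_or_lt with hx | hx
  · simp [← hx]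
  · rw [div_le_iff₀ (Real.sqrt_pos.2 hx)]
    exact hA.inner_le_sqrt_mul_sqrt e x

theorem IsPositive.iSup_inner_adjoint_div_sqrt_le [FiniteDimensional ℝ E] [FiniteDimensional ℝ F]
    (hA : A.IsPositive) (B : E →ₗ[ℝ] F) {e : E} {z : F} (he : A e = B.adjoint z) :
    ⨆ x : {x : E // x ≠ 0}, ⟪B x, z⟫ / √⟪A x, x⟫ ≤ √⟪A e, e⟫ := by
  have hB : ∀ x, ⟪B x, z⟫ = ⟪A e, x⟫ := fun x => by
    rw [he, adjoint_inner_left, real_inner_comm]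
  simpa only [hB] using hA.iSup_inner_div_sqrt_le e

end LinearMap

/-- `(y₁, y₂) = 𝓜_L 𝓐 (x₁, x₂)` is encoded by the two equations `A₁ y₁ = A₁ x₁ - B* x₂` and
`B y₁ + H₂op y₂ = B x₁`. -/
theorem stmt6 {H₁ H₂ : Type*}
    [NormedAddCommGroup H₁] [InnerProductSpace ℝ H₁] [FiniteDimensional ℝ H₁]
    [NormedAddCommGroup H₂] [InnerProductSpace ℝ H₂] [FiniteDimensional ℝ H₂]
    (A₁ : H₁ →ₗ[ℝ] H₁) (B : H₁ →ₗ[ℝ] H₂) (H₂op : H₂ →ₗ[ℝ] H₂) (ζ : ℝ)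
    (hA₁symm : ∀ x y : H₁, ⟪A₁ x, y⟫ = ⟪x, A₁ y⟫)
    (hA₁pos : ∀ x : H₁, x ≠ 0 → 0 < ⟪A₁ x, x⟫)
    (hHsymm : ∀ x y : H₂, ⟪H₂op x, y⟫ = ⟪x, H₂op y⟫)
    (hHpos : ∀ x : H₂, x ≠ 0 → 0 < ⟪H₂op x, x⟫)
    (hζ : 0 < ζ)
    (hinfsup : ∀ x₂ : H₂, ζ * Real.sqrt ⟪H₂op x₂, x₂⟫ ≤
      ⨆ x₁ : {x : H₁ // x ≠ 0},
        ⟪B (x₁ : H₁), x₂⟫ / Real.sqrt ⟪A₁ (x₁ : H₁), (x₁ : H₁)⟫) :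
    ∃ γ > (0 : ℝ), ∀ (x₁ y₁ : H₁) (x₂ y₂ : H₂),
      A₁ y₁ = A₁ x₁ - (LinearMap.adjoint B) x₂ →
      B y₁ + H₂op y₂ = B x₁ →
      ⟪A₁ x₁, y₁⟫ + ⟪H₂op x₂, y₂⟫ ≥ γ * (⟪A₁ x₁, x₁⟫ + ⟪H₂op x₂, x₂⟫) := by
  have hA := LinearMap.isPositive_of_forall_inner_pos hA₁symm hA₁pos
  have hH := LinearMap.isPositive_of_forall_inner_pos hHsymm hHpos
  refine ⟨min 1 (ζ ^ 2) / 2, by positivity, fun x₁ y₁ x₂ y₂ h₁ h₂ => ?_⟩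
  set e := x₁ - y₁
  have he : A₁ e = B.adjoint x₂ := by rw [map_sub, h₁, sub_sub_cancel]
  have hHy : ⟪H₂op x₂, y₂⟫ = ⟪A₁ e, e⟫ := by
    have hy : H₂op y₂ = B e := by rw [map_sub, ← h₂, add_sub_cancel_left]
    rw [hHsymm, hy, ← LinearMap.adjoint_inner_left, ← he, real_inner_comm]
  have hinf : ζ ^ 2 * ⟪H₂op x₂, x₂⟫ ≤ ⟪A₁ e, e⟫ := by
    have := (hinfsup x₂).trans (hA.iSup_inner_adjoint_div_sqrt_le B he)
    rwa [← Real.sqrt_sq hζ.le, ← Real.sqrt_mul (sq_nonneg ζ),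
      Real.sqrt_le_sqrt_iff (hA.inner_nonneg_left e)] at this
  have hpolar : 2 * ⟪A₁ x₁, y₁⟫ = ⟪A₁ x₁, x₁⟫ + ⟪A₁ y₁, y₁⟫ - ⟪A₁ e, e⟫ := by
    linarith [hA.isSymmetric.inner_map_sub_self x₁ y₁]
  have hmin₁ : min 1 (ζ ^ 2) * ⟪A₁ x₁, x₁⟫ ≤ ⟪A₁ x₁, x₁⟫ :=
    mul_le_of_le_one_left (hA.inner_nonneg_left x₁) (min_le_left _ _)
  have hmin₂ : min 1 (ζ ^ 2) * ⟪H₂op x₂, x₂⟫ ≤ ζ ^ 2 * ⟪H₂op x₂, x₂⟫ :=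
    mul_le_mul_of_nonneg_right (min_le_right _ _) (hH.inner_nonneg_left x₂)
  linarith [hA.inner_nonneg_left y₁]
end

section
/- Let H₁, H₂ be finite-dimensional real inner product spaces, A₁ SPD on H₁, B : H₁ → H₂ linear, and let Q₁ (SPD on H₁) satisfy ‖I - Q₁A₁‖_{A₁} ≤ ρ with 0 ≤ ρ < 1. Then for all x₁ ∈ H₁ and x₂ ∈ H₂: ⟨A₁ x₁, x₁⟩ - ⟨Q₁A₁ x₁, B*x₂⟩ + ⟨Q₁ B*x₂, B*x₂⟩ ≥ γ₀ (‖x₁‖²_{A₁} + ‖B*x₂‖²_{Q₁}), where γ₀ = 1 - (1+ρ)/2 > 0 and ‖v‖²_{Q₁} = ⟨Q₁v, v⟩. -/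
/-!
Write `a = ‖x‖²_A`, `c = ‖v‖²_Q` and `p = ⟪Q A x, v⟫`. Cauchy–Schwarz in the `Q`-form gives
`p² ≤ ‖A x‖²_Q c`, and `‖A x‖²_Q = a - ⟪A (x - Q A x), x⟫ ≤ (1 + ρ) a` by Cauchy–Schwarz in the
`A`-form together with `‖x - Q A x‖_A ≤ ρ ‖x‖_A`. Hence `2p ≤ (1 + ρ) a + c ≤ (1 + ρ) (a + c)`,
which is the claim.
-/

open scoped RealInnerProductSpace

namespace LinearMap

variable {E : Type*} [NormedAddCommGroup E] [InnerProductSpace ℝ E]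

theorem isPositive_of_inner_map_self_pos {T : E →ₗ[ℝ] E} (hT : T.IsSymmetric)
    (hpos : ∀ x, x ≠ 0 → 0 < ⟪T x, x⟫) : T.IsPositive := by
  refine T.isPositive_iff.2 ⟨hT, fun x => ?_⟩
  rcases eq_or_ne x 0 with rfl | hx
  · simp
  · exact (hpos x hx).le

theorem IsPositive.inner_map_sq_le {T : E →ₗ[ℝ] E} (hT : T.IsPositive) (x y : E) :
    ⟪T x, y⟫ ^ 2 ≤ ⟪T x, x⟫ * ⟪T y, y⟫ := by
  have hyx : ⟪T y, x⟫ = ⟪T x, y⟫ := by rw [hT.isSymmetric y x, real_inner_comm]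
  have := BilinForm.apply_mul_apply_le_of_forall_zero_le ((innerₗ E).comp T)
    hT.inner_nonneg_left x y
  simpa only [comp_apply, innerₗ_apply_apply, hyx, ← sq] using this

theorem IsPositive.inner_map_map_self_le {A : E →ₗ[ℝ] E} (hA : A.IsPositive) (Q : E →ₗ[ℝ] E)
    {ρ : ℝ} (hρ : 0 ≤ ρ)
    (hbound : ∀ x, ⟪A (x - Q (A x)), x - Q (A x)⟫ ≤ ρ ^ 2 * ⟪A x, x⟫) (x : E) :
    ⟪Q (A x), A x⟫ ≤ (1 + ρ) * ⟪A x, x⟫ := by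
  set w := x - Q (A x)
  have ha : 0 ≤ ⟪A x, x⟫ := hA.inner_nonneg_left x
  have hsplit : ⟪Q (A x), A x⟫ = ⟪A x, x⟫ - ⟪A w, x⟫ := by
    rw [map_sub, inner_sub_left, hA.isSymmetric (Q (A x)) x]
    ring
  have hsq : ⟪A w, x⟫ ^ 2 ≤ (ρ * ⟪A x, x⟫) ^ 2 :=
    calc ⟪A w, x⟫ ^ 2 ≤ ⟪A w, w⟫ * ⟪A x, x⟫ := hA.inner_map_sq_le w x
      _ ≤ ρ ^ 2 * ⟪A x, x⟫ * ⟪A x, x⟫ := mul_le_mul_of_nonneg_right (hbound x) ha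
      _ = (ρ * ⟪A x, x⟫) ^ 2 := by ring
  linarith [(abs_le_of_sq_le_sq' hsq (mul_nonneg hρ ha)).1]

theorem IsPositive.inner_map_map_le {A Q : E →ₗ[ℝ] E} (hA : A.IsPositive)
    (hQ : Q.IsPositive) {ρ : ℝ} (hρ : 0 ≤ ρ)
    (hbound : ∀ x, ⟪A (x - Q (A x)), x - Q (A x)⟫ ≤ ρ ^ 2 * ⟪A x, x⟫) (x v : E) :
    ⟪Q (A x), v⟫ ≤ (1 + ρ) / 2 * (⟪A x, x⟫ + ⟪Q v, v⟫) := by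
  have ha : 0 ≤ ⟪A x, x⟫ := hA.inner_nonneg_left x
  have hc : 0 ≤ ⟪Q v, v⟫ := hQ.inner_nonneg_left v
  have hcs : ⟪Q (A x), v⟫ ^ 2 ≤ (1 + ρ) * ⟪A x, x⟫ * ⟪Q v, v⟫ :=
    (hQ.inner_map_sq_le (A x) v).trans <|
      mul_le_mul_of_nonneg_right (hA.inner_map_map_self_le Q hρ hbound x) hc
  have := two_mul_le_add_of_sq_le_mul (by positivity) hc hcs
  linarith [mul_nonneg hρ hc]

end LinearMap

theorem stmt8_general {H₁ H₂ : Type*}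
    [NormedAddCommGroup H₁] [InnerProductSpace ℝ H₁] [FiniteDimensional ℝ H₁]
    [NormedAddCommGroup H₂] [InnerProductSpace ℝ H₂] [FiniteDimensional ℝ H₂]
    (A₁ Q₁ : H₁ →ₗ[ℝ] H₁) (B : H₁ →ₗ[ℝ] H₂) (ρ : ℝ)
    (hA₁symm : ∀ x y : H₁, ⟪A₁ x, y⟫ = ⟪x, A₁ y⟫)
    (hA₁pos : ∀ x : H₁, x ≠ 0 → 0 < ⟪A₁ x, x⟫)
    (hQsymm : ∀ x y : H₁, ⟪Q₁ x, y⟫ = ⟪x, Q₁ y⟫)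
    (hQpos : ∀ x : H₁, x ≠ 0 → 0 < ⟪Q₁ x, x⟫)
    (hρ0 : 0 ≤ ρ)
    (hbound : ∀ x : H₁, ⟪A₁ (x - Q₁ (A₁ x)), x - Q₁ (A₁ x)⟫ ≤ ρ^2 * ⟪A₁ x, x⟫) :
    ∀ (x₁ : H₁) (x₂ : H₂),
      ⟪A₁ x₁, x₁⟫ - ⟪Q₁ (A₁ x₁), (LinearMap.adjoint B) x₂⟫
        + ⟪Q₁ ((LinearMap.adjoint B) x₂), (LinearMap.adjoint B) x₂⟫
      ≥ (1 - (1 + ρ)/2) *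
        (⟪A₁ x₁, x₁⟫ + ⟪Q₁ ((LinearMap.adjoint B) x₂), (LinearMap.adjoint B) x₂⟫) := by
  intro x₁ x₂
  have hA := LinearMap.isPositive_of_inner_map_self_pos hA₁symm hA₁pos
  have hQ := LinearMap.isPositive_of_inner_map_self_pos hQsymm hQpos
  have := hA.inner_map_map_le hQ hρ0 hbound x₁ (LinearMap.adjoint B x₂)
  linarith

/-- Core estimate of the inexact block triangular preconditioner analysis:
`⟨A₁x₁, x₁⟩ - ⟨Q₁A₁x₁, B*x₂⟩ + ⟨Q₁B*x₂, B*x₂⟩ ≥ γ₀(‖x₁‖²_{A₁} + ‖B*x₂‖²_{Q₁})`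
with `γ₀ = 1 - (1+ρ)/2`. -/
theorem stmt8 {H₁ H₂ : Type*}
    [NormedAddCommGroup H₁] [InnerProductSpace ℝ H₁] [FiniteDimensional ℝ H₁]
    [NormedAddCommGroup H₂] [InnerProductSpace ℝ H₂] [FiniteDimensional ℝ H₂]
    (A₁ Q₁ : H₁ →ₗ[ℝ] H₁) (B : H₁ →ₗ[ℝ] H₂) (ρ : ℝ)
    (hA₁symm : ∀ x y : H₁, ⟪A₁ x, y⟫ = ⟪x, A₁ y⟫)
    (hA₁pos : ∀ x : H₁, x ≠ 0 → 0 < ⟪A₁ x, x⟫)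
    (hQsymm : ∀ x y : H₁, ⟪Q₁ x, y⟫ = ⟪x, Q₁ y⟫)
    (hQpos : ∀ x : H₁, x ≠ 0 → 0 < ⟪Q₁ x, x⟫)
    (hρ0 : 0 ≤ ρ) (hρ1 : ρ < 1)
    (hbound : ∀ x : H₁, ⟪A₁ (x - Q₁ (A₁ x)), x - Q₁ (A₁ x)⟫ ≤ ρ^2 * ⟪A₁ x, x⟫) :
    ∀ (x₁ : H₁) (x₂ : H₂),
      ⟪A₁ x₁, x₁⟫ - ⟪Q₁ (A₁ x₁), (LinearMap.adjoint B) x₂⟫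
        + ⟪Q₁ ((LinearMap.adjoint B) x₂), (LinearMap.adjoint B) x₂⟫
      ≥ (1 - (1 + ρ)/2) *
        (⟪A₁ x₁, x₁⟫ + ⟪Q₁ ((LinearMap.adjoint B) x₂), (LinearMap.adjoint B) x₂⟫) :=
  stmt8_general A₁ Q₁ B ρ hA₁symm hA₁pos hQsymm hQpos hρ0 hbound
end

section
/- Let A₁ be SPD on a finite-dimensional inner product space H₁ and Q₁ SPD with ‖I - Q₁A₁‖_{A₁} ≤ ρ, 0 ≤ ρ < 1. Then for any u ∈ H₁ and w ∈ H₁: |⟨Q₁A₁u, w⟩| ≤ (1+ρ)‖u‖_{A₁}‖w‖_{Q₁}, where ‖w‖²_{Q₁} = ⟨Q₁w, w⟩ and ‖u‖²_{A₁} = ⟨A₁u, u⟩. -/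
/-!
Cauchy–Schwarz for the form `⟪Q₁ ·, ·⟫` gives `⟪Q₁A₁u, w⟫² ≤ ⟪Q₁A₁u, A₁u⟫ ‖w‖²_{Q₁}`, so it suffices
to bound `⟪Q₁A₁u, A₁u⟫ = ‖u‖²_{A₁} - ⟪A₁u, u - Q₁A₁u⟫` by `(1 + ρ)‖u‖²_{A₁}`; this follows from
Cauchy–Schwarz for `⟪A₁ ·, ·⟫` and `‖u - Q₁A₁u‖_{A₁} ≤ ρ‖u‖_{A₁}`.
-/

open scoped RealInnerProductSpace

section

variable {H : Type*} [NormedAddCommGroup H] [InnerProductSpace ℝ H] {B : H →ₗ[ℝ] H}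

theorem LinearMap.IsSymmetric.isPositive_of_inner_pos (hB : B.IsSymmetric)
    (hpos : ∀ x, x ≠ 0 → 0 < ⟪B x, x⟫) : B.IsPositive := by
  refine ⟨hB, fun x => ?_⟩
  rcases eq_or_ne x 0 with rfl | hx
  · simp
  · exact (hpos x hx).le

namespace LinearMap.IsPositive

theorem inner_map_sq_le_s15 (hB : B.IsPositive) (x y : H) :
    ⟪B x, y⟫ ^ 2 ≤ ⟪B x, x⟫ * ⟪B y, y⟫ := by
  have h := BilinForm.apply_mul_apply_le_of_forall_zero_le ((innerₗ H).comp B)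
    hB.inner_nonneg_left x y
  simp only [comp_apply, innerₗ_apply_apply] at h
  rwa [hB.isSymmetric y x, real_inner_comm (B x) y, ← sq] at h

theorem abs_inner_map_le_sqrt_mul_sqrt (hB : B.IsPositive) (x y : H) :
    |⟪B x, y⟫| ≤ √⟪B x, x⟫ * √⟪B y, y⟫ := by
  rw [← Real.sqrt_mul (hB.inner_nonneg_left x)]
  exact Real.abs_le_sqrt (hB.inner_map_sq_le_s15 x y)

theorem inner_map_comp_self_le {Q : H →ₗ[ℝ] H} (hB : B.IsPositive) {ρ : ℝ} (hρ : 0 ≤ ρ) {u : H}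
    (hu : ⟪B (u - Q (B u)), u - Q (B u)⟫ ≤ ρ ^ 2 * ⟪B u, u⟫) :
    ⟪Q (B u), B u⟫ ≤ (1 + ρ) * ⟪B u, u⟫ := by
  set a := ⟪B u, u⟫
  have ha : 0 ≤ a := hB.inner_nonneg_left u
  have hsplit : ⟪Q (B u), B u⟫ = a - ⟪B u, u - Q (B u)⟫ := by
    rw [inner_sub_right, real_inner_comm]; ring
  have hcross : ⟪B u, u - Q (B u)⟫ ^ 2 ≤ (ρ * a) ^ 2 :=
    calc ⟪B u, u - Q (B u)⟫ ^ 2 ≤ a * ⟪B (u - Q (B u)), u - Q (B u)⟫ := hB.inner_map_sq_le_s15 _ _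
      _ ≤ a * (ρ ^ 2 * a) := mul_le_mul_of_nonneg_left hu ha
      _ = (ρ * a) ^ 2 := by ring
  have := (abs_le_of_sq_le_sq' hcross (mul_nonneg hρ ha)).1
  linarith

end LinearMap.IsPositive

end

theorem stmt15_general {H₁ : Type*} [NormedAddCommGroup H₁] [InnerProductSpace ℝ H₁]
    (A₁ Q₁ : H₁ →ₗ[ℝ] H₁) (ρ : ℝ)
    (hAsymm : ∀ x y : H₁, ⟪A₁ x, y⟫ = ⟪x, A₁ y⟫)
    (hApos : ∀ x : H₁, x ≠ 0 → 0 < ⟪A₁ x, x⟫)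
    (hQsymm : ∀ x y : H₁, ⟪Q₁ x, y⟫ = ⟪x, Q₁ y⟫)
    (hQpos : ∀ x : H₁, x ≠ 0 → 0 < ⟪Q₁ x, x⟫)
    (hρ0 : 0 ≤ ρ)
    (hbound : ∀ x : H₁, ⟪A₁ (x - Q₁ (A₁ x)), x - Q₁ (A₁ x)⟫ ≤ ρ^2 * ⟪A₁ x, x⟫) :
    ∀ u w : H₁,
      |⟪Q₁ (A₁ u), w⟫| ≤ (1 + ρ) * Real.sqrt ⟪A₁ u, u⟫ * Real.sqrt ⟪Q₁ w, w⟫ := by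
  have hA : A₁.IsPositive := LinearMap.IsSymmetric.isPositive_of_inner_pos hAsymm hApos
  have hQ : Q₁.IsPositive := LinearMap.IsSymmetric.isPositive_of_inner_pos hQsymm hQpos
  intro u w
  have hQA : √⟪Q₁ (A₁ u), A₁ u⟫ ≤ (1 + ρ) * √⟪A₁ u, u⟫ := by
    calc √⟪Q₁ (A₁ u), A₁ u⟫ ≤ √(1 + ρ) * √⟪A₁ u, u⟫ := by
          rw [← Real.sqrt_mul (by linarith)]
          exact Real.sqrt_le_sqrt (hA.inner_map_comp_self_le hρ0 (hbound u))
      _ ≤ (1 + ρ) * √⟪A₁ u, u⟫ := by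
          gcongr
          exact Real.sqrt_le_self_iff.2 (Or.inr (by linarith))
  calc |⟪Q₁ (A₁ u), w⟫| ≤ √⟪Q₁ (A₁ u), A₁ u⟫ * √⟪Q₁ w, w⟫ := hQ.abs_inner_map_le_sqrt_mul_sqrt _ _
    _ ≤ (1 + ρ) * √⟪A₁ u, u⟫ * √⟪Q₁ w, w⟫ := by gcongr

/-- If `‖I - Q₁A₁‖_{A₁} ≤ ρ` with `0 ≤ ρ < 1`, then
`|⟨Q₁A₁u, w⟩| ≤ (1+ρ)‖u‖_{A₁}‖w‖_{Q₁}`. -/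
theorem stmt15 {H₁ : Type*} [NormedAddCommGroup H₁] [InnerProductSpace ℝ H₁]
    [FiniteDimensional ℝ H₁]
    (A₁ Q₁ : H₁ →ₗ[ℝ] H₁) (ρ : ℝ)
    (hAsymm : ∀ x y : H₁, ⟪A₁ x, y⟫ = ⟪x, A₁ y⟫)
    (hApos : ∀ x : H₁, x ≠ 0 → 0 < ⟪A₁ x, x⟫)
    (hQsymm : ∀ x y : H₁, ⟪Q₁ x, y⟫ = ⟪x, Q₁ y⟫)
    (hQpos : ∀ x : H₁, x ≠ 0 → 0 < ⟪Q₁ x, x⟫)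
    (hρ0 : 0 ≤ ρ) (hρ1 : ρ < 1)
    (hbound : ∀ x : H₁, ⟪A₁ (x - Q₁ (A₁ x)), x - Q₁ (A₁ x)⟫ ≤ ρ^2 * ⟪A₁ x, x⟫) :
    ∀ u w : H₁,
      |⟪Q₁ (A₁ u), w⟫| ≤ (1 + ρ) * Real.sqrt ⟪A₁ u, u⟫ * Real.sqrt ⟪Q₁ w, w⟫ :=
  stmt15_general A₁ Q₁ ρ hAsymm hApos hQsymm hQpos hρ0 hbound
end

section
/- For real numbers ξ₁, ξ₂, ξ₃, ξ₄, ξ₅ and ρ ∈ [0, 0.289), the quadratic form ξ₁² - (1+ρ)ξ₁ξ₂ - ((1+ρ)/√2)ξ₁ξ₄ + ξ₂² + ξ₃² - ξ₃ξ₅ + ((1-ρ)/2)ξ₄² + ξ₅² admits a positive lower bound γ₀(ξ₁² + ξ₂² + ξ₃² + ξ₄² + ξ₅²) for some γ₀ > 0 depending only on ρ. -/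
/-!
The form splits into a block in `(ξ₁, ξ₂, ξ₄)` and the block `ξ₃² - ξ₃ξ₅ + ξ₅²`. Completing the
squares in `ξ₂` and `ξ₄` shows that `x² - 2axy - 2bxz + y² + cz²` is positive definite as soon as
`a²c + b² < c`; for `a = (1+ρ)/2`, `b = (1+ρ)/(2√2)`, `c = (1-ρ)/2` this condition reads
`ρ³ - 7ρ + 2 > 0`, which holds on `[0, 0.289)`. The condition is strict, so by continuity it
survives subtracting `γ` from the diagonal for all small `γ`, which gives the coercivity constant.
-/

open Filter Topology

lemma ternary_form_nonneg {r p q a b : ℝ} (hp : 0 < p) (hq : 0 < q)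
    (h : a ^ 2 * q + b ^ 2 * p ≤ p * q * r) (x y z : ℝ) :
    0 ≤ r * x ^ 2 - 2 * a * x * y - 2 * b * x * z + p * y ^ 2 + q * z ^ 2 := by
  have hsq : p * q * (r * x ^ 2 - 2 * a * x * y - 2 * b * x * z + p * y ^ 2 + q * z ^ 2)
      = q * (p * y - a * x) ^ 2 + p * (q * z - b * x) ^ 2
        + (p * q * r - (a ^ 2 * q + b ^ 2 * p)) * x ^ 2 := by ring
  have hrhs : 0 ≤ q * (p * y - a * x) ^ 2 + p * (q * z - b * x) ^ 2
      + (p * q * r - (a ^ 2 * q + b ^ 2 * p)) * x ^ 2 := by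
    have := mul_nonneg (sub_nonneg.2 h) (sq_nonneg x)
    positivity
  exact nonneg_of_mul_nonneg_right (hsq ▸ hrhs) (mul_pos hp hq)

lemma eventually_ternary_form_coercive {a b c : ℝ} (hc : 0 < c) (h : a ^ 2 * c + b ^ 2 < c) :
    ∀ᶠ γ in 𝓝 (0 : ℝ), ∀ x y z : ℝ,
      γ * (x ^ 2 + y ^ 2 + z ^ 2) ≤ x ^ 2 - 2 * a * x * y - 2 * b * x * z + y ^ 2 + c * z ^ 2 := by
  have hdet : ∀ᶠ γ in 𝓝 (0 : ℝ),
      a ^ 2 * (c - γ) + b ^ 2 * (1 - γ) < (1 - γ) * (c - γ) * (1 - γ) :=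
    ContinuousAt.eventually_lt (by fun_prop) (by fun_prop) (by simpa using h)
  filter_upwards [hdet, eventually_lt_nhds one_pos, eventually_lt_nhds hc] with γ hγ hγ1 hγc x y z
  have := ternary_form_nonneg (sub_pos.2 hγ1) (sub_pos.2 hγc) hγ.le x y z
  linarith

lemma mul_add_sq_le_sq_sub_mul_add_sq {γ : ℝ} (hγ : γ ≤ 1 / 2) (x y : ℝ) :
    γ * (x ^ 2 + y ^ 2) ≤ x ^ 2 - x * y + y ^ 2 := by
  nlinarith [sq_nonneg (x - y), sq_nonneg x, sq_nonneg y]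

/-- Coercivity of the 5×5 quadratic form in the inexact block lower triangular
preconditioner analysis, for `0 ≤ ρ < 0.289`. -/
theorem stmt17 (ρ : ℝ) (hρ0 : 0 ≤ ρ) (hρ1 : ρ < 0.289) :
    ∃ γ₀ > (0 : ℝ), ∀ ξ₁ ξ₂ ξ₃ ξ₄ ξ₅ : ℝ,
      ξ₁^2 - (1 + ρ) * ξ₁ * ξ₂ - ((1 + ρ) / Real.sqrt 2) * ξ₁ * ξ₄
        + ξ₂^2 + ξ₃^2 - ξ₃ * ξ₅ + ((1 - ρ)/2) * ξ₄^2 + ξ₅^2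
      ≥ γ₀ * (ξ₁^2 + ξ₂^2 + ξ₃^2 + ξ₄^2 + ξ₅^2) := by
  have hcubic : 0 < ρ ^ 3 - 7 * ρ + 2 := by
    have hquad : 0 < 7 - (ρ ^ 2 + 0.289 * ρ + 0.289 ^ 2) := by nlinarith
    -- with `r = 0.289`: `ρ³ - 7ρ + 2 = (r - ρ)(7 - ρ² - rρ - r²) + (r³ - 7r + 2)` and `r³ - 7r + 2 > 0`
    nlinarith [mul_pos (sub_pos.2 hρ1) hquad]
  have hb : ((1 + ρ) / (2 * Real.sqrt 2)) ^ 2 = (1 + ρ) ^ 2 / 8 := by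
    rw [div_pow, mul_pow, Real.sq_sqrt zero_le_two]; norm_num
  have hdet : ((1 + ρ) / 2) ^ 2 * ((1 - ρ) / 2) + ((1 + ρ) / (2 * Real.sqrt 2)) ^ 2
      < (1 - ρ) / 2 := by
    rw [hb]; nlinarith
  obtain ⟨γ, ⟨hcoer, hγ⟩, hγpos⟩ :=
    ((((eventually_ternary_form_coercive (by linarith) hdet).and
      (eventually_le_nhds one_half_pos)).filter_mono nhdsWithin_le_nhds).and
      self_mem_nhdsWithin).exists (f := 𝓝[>] (0 : ℝ))
  refine ⟨γ, hγpos, fun ξ₁ ξ₂ ξ₃ ξ₄ ξ₅ => ?_⟩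
  have h124 := hcoer ξ₁ ξ₂ ξ₄
  have h35 := mul_add_sq_le_sq_sub_mul_add_sq hγ ξ₃ ξ₅
  have hsplit : 2 * ((1 + ρ) / (2 * Real.sqrt 2)) = (1 + ρ) / Real.sqrt 2 := by ring
  rw [← hsplit]
  linarith
end
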